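/- If a triple (w, r₁, r₂) is not c̃-defined, then the left-hand sides factor as l₁ = x u y and l₂ = y v x for some words u, v and nonempty words x, y. -/
import Mathlib


/-- `u` and `v` are cyclic conjugates in the free monoid `Σ*`. -/
def CycConj {α : Type*} (u v : List α) : Prop :=
  ∃ x y : List α, u = x ++ y ∧ v = y ++ x

/-- One rewriting step of the rewriting system `R`. -/
def Step {α : Type*} (R : List α → List α → Prop) (u v : List α) : Prop :=
  ∃ l r x y : List α, R l r ∧ u = x ++ l ++ y ∧ v = x ++ r ++ y

/-- One cyclic reduction step: some cyclic conjugate of `u` rewrites to `v`. -/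
def CycStep {α : Type*} (R : List α → List α → Prop) (u v : List α) : Prop :=
  ∃ w : List α, CycConj u w ∧ Step R w v

/-- `u` is cyclically irreducible: `u` and all its cyclic conjugates are irreducible. -/
def CycIrred {α : Type*} (R : List α → List α → Prop) (u : List α) : Prop :=
  ∀ w : List α, CycConj u w → ∀ v : List α, ¬ Step R w v

/-- Equality in the monoid presented by the rewriting system `R`. -/
def MEq {α : Type*} (R : List α → List α → Prop) : List α → List α → Prop :=
  Relation.EqvGen (Step R)

/-- `u ≡_M v` : `u` and `v` are left and right conjugates in the monoid presented by `R`. -/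
def MConj {α : Type*} (R : List α → List α → Prop) (u v : List α) : Prop :=
  ∃ x y : List α, MEq R (u ++ x) (x ++ v) ∧ MEq R (y ++ u) (v ++ y)

/-- `R` is reduced. -/
def Reduced {α : Type*} (R : List α → List α → Prop) : Prop :=
  ∀ l r : List α, R l r → (∀ v : List α, ¬ Step R r v) ∧
    ∀ l' r' x y : List α, R l' r' → l = x ++ l' ++ y → x = [] ∧ y = []

lemma cycConj_iff_isRotated {α : Type*} {u v : List α} :
    CycConj u v ↔ u ~r v := by
  constructor
  · rintro ⟨x, y, rfl, rfl⟩
    exact List.isRotated_append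
  · rintro ⟨n, rfl⟩
    rcases Nat.eq_zero_or_pos u.length with h | h
    · rw [List.length_eq_zero_iff] at h
      subst h
      exact ⟨[], [], by simp, by simp⟩
    · refine ⟨u.take (n % u.length), u.drop (n % u.length),
        (List.take_append_drop _ _).symm, ?_⟩
      rw [← List.rotate_mod,
        List.rotate_eq_drop_append_take (le_of_lt (Nat.mod_lt _ h))]

lemma rot3 {α : Type*} (a b c : List α) : (a ++ b ++ c) ~r (b ++ (c ++ a)) := by
  have h1 : ((a) ++ (b ++ c)) ~r ((b ++ c) ++ a) := List.isRotated_append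
  simpa [List.append_assoc] using h1

/-- if the triple `(w, r₁, r₂)` is not c̃-defined, then the
left-hand sides factor as `l₁ = x u y` and `l₂ = y v x` with `x, y` nonempty. -/
theorem factor_of_not_cdefined {α : Type*} (R : List α → List α → Prop)
    (htermS : ¬ ∃ g : ℕ → List α, ∀ n : ℕ, Step R (g n) (g (n + 1)))
    (hconfS : ∀ w u v : List α, Relation.ReflTransGen (Step R) w u →
      Relation.ReflTransGen (Step R) w v →
      ∃ z : List α, Relation.ReflTransGen (Step R) u z ∧
        Relation.ReflTransGen (Step R) v z)
    (hred : Reduced R)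
    (w w₁ w₂ l₁ m₁ l₂ m₂ : List α) (h₁ : R l₁ m₁) (h₂ : R l₂ m₂)
    (hc₁ : CycConj w w₁) (ho₁ : ∃ a b : List α, w₁ = a ++ l₁ ++ b)
    (hc₂ : CycConj w w₂) (ho₂ : ∃ a b : List α, w₂ = a ++ l₂ ++ b)
    (hnd : ¬ ∃ wt : List α, CycConj w wt ∧ (∃ a b : List α, wt = a ++ l₁ ++ b) ∧
        (∃ a b : List α, wt = a ++ l₂ ++ b)) :
    ∃ x y u v : List α, x ≠ [] ∧ y ≠ [] ∧ l₁ = x ++ u ++ y ∧ l₂ = y ++ v ++ x := by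
  clear htermS hconfS hred h₁ h₂
  obtain ⟨a, b, rfl⟩ := ho₁
  obtain ⟨a₂, b₂, rfl⟩ := ho₂
  rw [cycConj_iff_isRotated] at hc₁ hc₂
  have key : ∀ wt : List α, w ~r wt → (∃ a b, wt = a ++ l₁ ++ b) →
      (∃ a b, wt = a ++ l₂ ++ b) → False := fun wt hr h1 h2 =>
    hnd ⟨wt, cycConj_iff_isRotated.mpr hr, h1, h2⟩
  have hw' : w ~r (l₁ ++ (b ++ a)) := hc₁.trans (rot3 a l₁ b)
  set c := b ++ a with hcdef
  obtain ⟨e, f, he, hf⟩ : CycConj (a₂ ++ l₂ ++ b₂) (l₁ ++ c) :=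
    cycConj_iff_isRotated.mpr (hc₂.symm.trans hw')
  rw [List.append_assoc] at he
  rcases List.append_eq_append_iff.mp he with ⟨a', hea, hl2b⟩ | ⟨a', haa, hfa⟩
  · -- e = a₂ ++ a', l₂ ++ b₂ = a' ++ f
    rcases List.append_eq_append_iff.mp hl2b with ⟨t, ha', hb₂⟩ | ⟨s₂, hl₂, hff⟩
    · -- a' = l₂ ++ t : l₂ lies inside e, so w' = l₁ ++ c contains both
      exact absurd (key (l₁ ++ c) hw' ⟨[], c, by simp⟩
        ⟨f ++ a₂, t, by rw [hf, hea, ha']; simp [List.append_assoc]⟩) not_false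
    · -- l₂ = a' ++ s₂, f = s₂ ++ b₂  (main case)
      have hmain : l₁ ++ c = s₂ ++ (b₂ ++ (a₂ ++ a')) := by
        rw [hf, hff, hea]; simp [List.append_assoc]
      rcases List.append_eq_append_iff.mp hmain with ⟨m, hs₂, hcm⟩ | ⟨m, hl₁, hX⟩
      · -- s₂ = l₁ ++ m : rotation (b₂ ++ (a₂ ++ a')) ++ s₂ contains both
        refine absurd (key ((b₂ ++ (a₂ ++ a')) ++ s₂) ?_ ?_ ?_) not_false
        · exact (hw'.trans (by rw [hmain]; exact List.isRotated_append))
        · exact ⟨b₂ ++ (a₂ ++ a'), m, by rw [hs₂]; simp [List.append_assoc]⟩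
        · exact ⟨b₂ ++ a₂, [], by rw [hl₂]; simp [List.append_assoc]⟩
      · -- l₁ = s₂ ++ m, b₂ ++ (a₂ ++ a') = m ++ c
        have hX' : (b₂ ++ a₂) ++ a' = m ++ c := by rw [← hX]; simp [List.append_assoc]
        rcases List.append_eq_append_iff.mp hX' with ⟨k, hm, ha'⟩ | ⟨k, hba, hck⟩
        · -- m = (b₂ ++ a₂) ++ k, a' = k ++ c : GOOD case
          -- s₂ ≠ []
          rcases eq_or_ne s₂ [] with rfl | hs₂ne
          · refine absurd (key (l₁ ++ c) hw' ⟨[], c, by simp⟩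
              ⟨b₂ ++ a₂, [], ?_⟩) not_false
            simp [hmain, hl₂, ha', List.append_assoc]
          rcases eq_or_ne k [] with rfl | hkne
          · -- k = [] : a' = c, rotation c ++ l₁ contains both
            refine absurd (key (c ++ l₁) (hw'.trans List.isRotated_append)
              ⟨c, [], by simp⟩ ⟨[], b₂ ++ a₂, ?_⟩) not_false
            simp [hl₂, hl₁, hm, ha', List.append_assoc]
          exact ⟨s₂, k, b₂ ++ a₂, c, hs₂ne, hkne,
            by rw [hl₁, hm]; simp [List.append_assoc],
            by simp [hl₂, ha', List.append_assoc]⟩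
        · -- b₂ ++ a₂ = m ++ k, c = k ++ a' : rotation a' ++ (l₁ ++ k) contains both
          refine absurd (key (a' ++ (l₁ ++ k)) ?_ ⟨a', k, by simp [List.append_assoc]⟩ ?_) not_false
          · refine hw'.trans ?_
            rw [hck, ← List.append_assoc]
            exact List.isRotated_append
          · exact ⟨[], m ++ k, by rw [hl₂, hl₁]; simp [List.append_assoc]⟩
  · -- a₂ = e ++ a', f = a' ++ (l₂ ++ b₂) : l₂ inside f, w' contains both
    exact absurd (key (l₁ ++ c) hw' ⟨[], c, by simp⟩
      ⟨a', b₂ ++ e, by rw [hf, hfa]; simp [List.append_assoc]⟩) not_false
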